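/- Let k ≥ 1 and let F be a 2-factor on 4k vertices. Let C be the red/blue-coloring of the complete graph on 4k vertices in which the red edges induce two vertex-disjoint complete graphs of size 2k each (and all remaining edges are blue). Then C contains a copy of F with at least 4k − 2 red edges, and C contains a copy of F with at least 8k/3 blue edges. -/

import Mathlib

/-- The "two cliques" coloring determined by the set `X`: an edge is red (`true`) iff both of
its endpoints lie in `X` or both lie outside `X`, and blue (`false`) otherwise. -/
def cliquesColoring {N : ℕ} (X : Finset (Fin N)) : Sym2 (Fin N) → Bool :=
  Sym2.lift ⟨fun u v => decide ((u ∈ X ∧ v ∈ X) ∨ (u ∉ X ∧ v ∉ X)), by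
    intro u v
    simp only [decide_eq_decide]
    tauto⟩


open Finset

variable {V : Type*} [Fintype V] [DecidableEq V]

/-- the neighbor of `b` other than `a` -/
noncomputable def nV (G : SimpleGraph V) [DecidableRel G.Adj] (a b : V) : V :=
  if h : ((G.neighborFinset b).erase a).Nonempty then h.choose else b

section nV
variable {G : SimpleGraph V} [DecidableRel G.Adj]
  (hdeg : ∀ v, (G.neighborFinset v).card = 2)
include hdeg

lemma nV_mem {a b : V} (hab : G.Adj a b) :
    nV G a b ∈ (G.neighborFinset b).erase a := by
  have ha : a ∈ G.neighborFinset b := by simpa using hab.symm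
  have h1 : ((G.neighborFinset b).erase a).card = 1 := by
    rw [Finset.card_erase_of_mem ha, hdeg]
  have h : ((G.neighborFinset b).erase a).Nonempty := by
    rw [← Finset.card_pos, h1]; norm_num
  rw [nV, dif_pos h]
  exact h.choose_spec

lemma nV_adj {a b : V} (hab : G.Adj a b) : G.Adj b (nV G a b) := by
  have := nV_mem hdeg hab
  simp only [Finset.mem_erase, SimpleGraph.mem_neighborFinset] at this
  exact this.2

lemma nV_ne {a b : V} (hab : G.Adj a b) : nV G a b ≠ a :=
  (Finset.mem_erase.1 (nV_mem hdeg hab)).1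

lemma nV_unique {a b c : V} (hab : G.Adj a b) (hbc : G.Adj b c) (hca : c ≠ a) :
    c = nV G a b := by
  have ha : a ∈ G.neighborFinset b := by simpa using hab.symm
  have h1 : ((G.neighborFinset b).erase a).card = 1 := by
    rw [Finset.card_erase_of_mem ha, hdeg]
  have hc : c ∈ (G.neighborFinset b).erase a := by
    simp [hca, hbc]
  have hn := nV_mem hdeg hab
  obtain ⟨x, hx⟩ := Finset.card_eq_one.1 h1
  rw [hx, Finset.mem_singleton] at hc hn
  rw [hc, hn]

lemma nV_invol {a b : V} (hab : G.Adj a b) : nV G (nV G a b) b = a :=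
  (nV_unique hdeg (nV_adj hdeg hab).symm hab.symm (nV_ne hdeg hab).symm).symm

end nV

/-- walk pairs: `(walk2 G v0 v1 n) = (g n, g (n+1))` -/
noncomputable def walk2 (G : SimpleGraph V) [DecidableRel G.Adj] (v0 v1 : V) : ℕ → V × V
  | 0 => (v0, v1)
  | n+1 => ((walk2 G v0 v1 n).2, nV G (walk2 G v0 v1 n).1 (walk2 G v0 v1 n).2)

/-- the walk itself -/
noncomputable def wk (G : SimpleGraph V) [DecidableRel G.Adj] (v0 v1 : V) (n : ℕ) : V :=
  (walk2 G v0 v1 n).1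

section walk
variable {G : SimpleGraph V} [DecidableRel G.Adj]
  (hdeg : ∀ v, (G.neighborFinset v).card = 2) (v0 v1 : V) (h01 : G.Adj v0 v1)

lemma walk2_snd (n : ℕ) : (walk2 G v0 v1 n).2 = wk G v0 v1 (n+1) := rfl

lemma walk2_eta (n : ℕ) : walk2 G v0 v1 n = (wk G v0 v1 n, wk G v0 v1 (n+1)) := rfl

include hdeg h01

lemma walk2_adj : ∀ n, G.Adj (wk G v0 v1 n) (wk G v0 v1 (n+1)) := by
  intro n
  induction n with
  | zero => exact h01
  | succ m ih => exact nV_adj hdeg ih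

omit hdeg h01 in
lemma walk2_g2 (n : ℕ) : wk G v0 v1 (n+2) = nV G (wk G v0 v1 n) (wk G v0 v1 (n+1)) := rfl

lemma walk2_back (n : ℕ) :
    wk G v0 v1 n = nV G (wk G v0 v1 (n+2)) (wk G v0 v1 (n+1)) := by
  rw [walk2_g2 v0 v1 n, nV_invol hdeg (walk2_adj hdeg v0 v1 h01 n)]

lemma walk2_backdet {i j : ℕ} (h : walk2 G v0 v1 (i+1) = walk2 G v0 v1 (j+1)) :
    walk2 G v0 v1 i = walk2 G v0 v1 j := by
  have h1 : wk G v0 v1 (i+1) = wk G v0 v1 (j+1) := congrArg Prod.fst h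
  have h2 : wk G v0 v1 (i+2) = wk G v0 v1 (j+2) := by
    have := congrArg Prod.snd h
    rwa [walk2_snd, walk2_snd] at this
  rw [walk2_eta, walk2_eta, walk2_back hdeg v0 v1 h01 i, walk2_back hdeg v0 v1 h01 j, h1, h2]

lemma walk2_shift : ∀ i j, i ≤ j → walk2 G v0 v1 i = walk2 G v0 v1 j →
    walk2 G v0 v1 0 = walk2 G v0 v1 (j - i) := by
  intro i
  induction i with
  | zero => intro j _ h; simpa using h
  | succ m ih =>
    intro j hij h
    obtain ⟨j', rfl⟩ : ∃ j', j = j' + 1 := ⟨j - 1, by omega⟩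
    have := walk2_backdet hdeg v0 v1 h01 h
    have := ih j' (by omega) this
    simpa using this

lemma walk2_exists_period : ∃ d, 0 < d ∧ walk2 G v0 v1 d = walk2 G v0 v1 0 := by
  obtain ⟨i, j, hne, hij⟩ : ∃ i j, i ≠ j ∧ walk2 G v0 v1 i = walk2 G v0 v1 j := by
    obtain ⟨i, j, hne, h⟩ := Finite.exists_ne_map_eq_of_infinite (walk2 G v0 v1)
    exact ⟨i, j, hne, h⟩
  rcases Nat.lt_or_ge i j with hlt | hge
  · exact ⟨j - i, by omega, (walk2_shift hdeg v0 v1 h01 i j hlt.le hij).symm⟩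
  · have hlt : j < i := by omega
    exact ⟨i - j, by omega, (walk2_shift hdeg v0 v1 h01 j i hlt.le hij.symm).symm⟩

end walk
section cyc
variable {G : SimpleGraph V} [DecidableRel G.Adj]
  (hdeg : ∀ v, (G.neighborFinset v).card = 2)
include hdeg

lemma exists_cycle {s : Finset V} (hs : ∀ v ∈ s, G.neighborFinset v ⊆ s) {v0 : V}
    (hv0 : v0 ∈ s) :
    ∃ (C : Finset V) (c : Equiv.Perm V), C.Nonempty ∧ C ⊆ s ∧
      (∀ v, v ∉ C → c v = v) ∧
      (∀ v ∈ C, c v ∈ C ∧ G.Adj v (c v) ∧ c (c v) ≠ v) ∧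
      (∀ v ∈ C, G.neighborFinset v ⊆ C) := by
  classical
  -- pick a neighbor of v0
  have hne : (G.neighborFinset v0).Nonempty := by
    rw [← Finset.card_pos, hdeg]; norm_num
  obtain ⟨v1, hv1⟩ := hne
  have h01 : G.Adj v0 v1 := by rwa [SimpleGraph.mem_neighborFinset] at hv1
  set g : ℕ → V := wk G v0 v1 with hg
  have hadj : ∀ n, G.Adj (g n) (g (n+1)) := walk2_adj hdeg v0 v1 h01
  have hgdist : ∀ n, g (n+2) ≠ g n := by
    intro n
    rw [hg, walk2_g2 v0 v1 n]
    exact nV_ne hdeg (hadj n)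
  -- minimal period
  have hex := walk2_exists_period hdeg v0 v1 h01
  set ℓ : ℕ := Nat.find hex with hℓdef
  obtain ⟨hℓpos, hℓ⟩ : 0 < ℓ ∧ walk2 G v0 v1 ℓ = walk2 G v0 v1 0 := Nat.find_spec hex
  have hmin : ∀ m, 0 < m → walk2 G v0 v1 m = walk2 G v0 v1 0 → ℓ ≤ m := by
    intro m hm h
    by_contra hlt
    exact Nat.find_min hex (by omega) ⟨hm, h⟩
  have hper : ∀ n, walk2 G v0 v1 (n + ℓ) = walk2 G v0 v1 n := by
    intro n
    induction n with
    | zero => simpa using hℓ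
    | succ m ih =>
      have hstep : ∀ j, walk2 G v0 v1 (j+1)
          = ((walk2 G v0 v1 j).2, nV G (walk2 G v0 v1 j).1 (walk2 G v0 v1 j).2) :=
        fun j => rfl
      have : m + 1 + ℓ = (m + ℓ) + 1 := by omega
      rw [this, hstep, hstep, ih]
  have hmod : ∀ n, walk2 G v0 v1 n = walk2 G v0 v1 (n % ℓ) := by
    intro n
    induction n using Nat.strong_induction_on with
    | _ n ih =>
      rcases Nat.lt_or_ge n ℓ with h | h
      · rw [Nat.mod_eq_of_lt h]
      · have h1 : n = (n - ℓ) + ℓ := by omega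
        have h2 : (n - ℓ) % ℓ = n % ℓ := by
          conv_rhs => rw [h1]
          rw [Nat.add_mod_right]
        calc walk2 G v0 v1 n = walk2 G v0 v1 ((n - ℓ) + ℓ) := by rw [← h1]
          _ = walk2 G v0 v1 (n - ℓ) := hper _
          _ = walk2 G v0 v1 ((n - ℓ) % ℓ) := ih (n - ℓ) (by omega)
          _ = walk2 G v0 v1 (n % ℓ) := by rw [h2]
  have gmod : ∀ n, g n = g (n % ℓ) := fun n => congrArg Prod.fst (hmod n)
  have pairinj : ∀ a b, a < b → 0 < a ∨ 0 < b - a → b ≤ ℓ → b - a < ℓ →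
      walk2 G v0 v1 a ≠ walk2 G v0 v1 b := by
    intro a b hab _ hbℓ hd h
    have h0 := walk2_shift hdeg v0 v1 h01 a b hab.le h
    have := hmin (b - a) (by omega) h0.symm
    omega
  have nbrpair : ∀ n, G.neighborFinset (g (n+1)) = {g n, g (n+2)} := by
    intro n
    have hsub : ({g n, g (n+2)} : Finset V) ⊆ G.neighborFinset (g (n+1)) := by
      intro x hx
      rw [Finset.mem_insert, Finset.mem_singleton] at hx
      rcases hx with rfl | rfl
      · simpa using (hadj n).symm
      · simpa using hadj (n+1)
    have hcard : ({g n, g (n+2)} : Finset V).card = 2 := by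
      rw [Finset.card_insert_of_notMem (by simp [(hgdist n).symm, Ne.symm]),
        Finset.card_singleton]
    exact (Finset.eq_of_subset_of_card_le hsub (by rw [hdeg, hcard])).symm
  -- vertex injectivity on a window
  have vertinj' : ∀ a b, 1 ≤ a → a < b → b ≤ ℓ → b - a < ℓ → g a ≠ g b := by
    intro a b ha hab hbl hd heq
    set d := b - a with hddef
    rcases Nat.lt_or_ge d 2 with hd2 | hd2
    · -- d = 1
      have hb : b = a + 1 := by omega
      rw [hb] at heq
      exact (hadj a).ne heq
    · have hpairne : walk2 G v0 v1 a ≠ walk2 G v0 v1 b :=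
        pairinj a b hab (Or.inl (by omega)) hbl hd
      have hA : G.neighborFinset (g a) = {g (a-1), g (a+1)} := by
        have := nbrpair (a-1)
        rw [show a - 1 + 1 = a by omega, show a - 1 + 2 = a + 1 by omega] at this
        exact this
      have hB : G.neighborFinset (g b) = {g (b-1), g (b+1)} := by
        have := nbrpair (b-1)
        rw [show b - 1 + 1 = b by omega, show b - 1 + 2 = b + 1 by omega] at this
        exact this
      have hsets : ({g (a-1), g (a+1)} : Finset V) = {g (b-1), g (b+1)} := by
        rw [← hA, ← hB, heq]
      have hne1 : g (a+1) ≠ g (b+1) := by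
        intro h
        apply hpairne
        rw [walk2_eta, walk2_eta]
        exact Prod.ext heq h
      have e1 : g (a+1) = g (b-1) := by
        have : g (a+1) ∈ ({g (b-1), g (b+1)} : Finset V) := by
          rw [← hsets]; simp
        rw [Finset.mem_insert, Finset.mem_singleton] at this
        tauto
      have e0 : g (b+1) = g (a-1) := by
        have : g (b+1) ∈ ({g (a-1), g (a+1)} : Finset V) := by
          rw [hsets]; simp
        rw [Finset.mem_insert, Finset.mem_singleton] at this
        rcases this with h | h
        · exact h
        · exact absurd h.symm hne1
      have pal : ∀ r, r + 1 ≤ d → g (a + r) = g (b - r) ∧ g (a + r + 1) = g (b - r - 1) := by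
        intro r
        induction r with
        | zero => intro _; exact ⟨by simpa using heq, by simpa using e1⟩
        | succ m ih =>
          intro hm
          obtain ⟨em1, em2⟩ := ih (by omega)
          constructor
          · rw [show a + (m+1) = a + m + 1 by omega, show b - (m+1) = b - m - 1 by omega]
            exact em2
          · rw [show a + (m+1) + 1 = (a + m) + 2 by omega,
              show b - (m+1) - 1 = b - m - 2 by omega]
            have hf : g ((a+m) + 2) = nV G (g (a+m)) (g (a+m+1)) := walk2_g2 v0 v1 (a+m)
            have hb2 : g (b-m-2) = nV G (g ((b-m-2)+2)) (g ((b-m-2)+1)) :=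
              walk2_back hdeg v0 v1 h01 (b-m-2)
            rw [show b-m-2+2 = b-m by omega, show b-m-2+1 = b-m-1 by omega] at hb2
            rw [hf, em1, em2, ← hb2]
      rcases Nat.even_or_odd d with ⟨c, hc⟩ | ⟨c, hc⟩
      · -- d = 2c, c ≥ 1
        have hc1 : 1 ≤ c := by omega
        obtain ⟨_, e2⟩ := pal c (by omega)
        rw [show b - c - 1 = a + c - 1 by omega] at e2
        have := hgdist (a + c - 1)
        rw [show a + c - 1 + 2 = a + c + 1 by omega] at this
        exact this e2
      · -- d = 2c+1
        obtain ⟨e1', _⟩ := pal c (by omega)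
        rw [show b - c = a + c + 1 by omega] at e1'
        exact (hadj (a+c)).ne e1'
  have hℓ3 : 3 ≤ ℓ := by
    by_contra h
    have h1 : ℓ = 1 ∨ ℓ = 2 := by omega
    rcases h1 with h1 | h1
    · rw [h1] at hℓ
      exact (hadj 0).ne (congrArg Prod.fst hℓ).symm
    · rw [h1] at hℓ
      exact hgdist 0 (congrArg Prod.fst hℓ)
  have vertinj : ∀ a b, a < ℓ → b < ℓ → a ≠ b → g a ≠ g b := by
    have key : ∀ a b, a < b → b < ℓ → g a ≠ g b := by
      intro a b hab hbl
      rcases Nat.eq_zero_or_pos a with rfl | ha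
      · intro h
        have hgl : g ℓ = g 0 := congrArg Prod.fst hℓ
        exact vertinj' b ℓ (by omega) hbl le_rfl (by omega) (h.symm.trans hgl.symm)
      · exact vertinj' a b ha hab (by omega) (by omega)
    intro a b ha hb hne
    rcases Nat.lt_or_ge a b with h | h
    · exact key a b h hb
    · exact fun he => key b a (by omega) ha he.symm
  -- the cycle as a list
  set L : List V := (List.range ℓ).map g with hL
  have hlen : L.length = ℓ := by simp [hL]
  have hgetL : ∀ i (h : i < ℓ), L[i]'(by omega) = g i := by
    intro i h
    simp [hL]
  have hnodup : L.Nodup := by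
    apply List.Nodup.map_on _ (List.nodup_range (n := ℓ))
    intro x hx y hy hxy
    rw [List.mem_range] at hx hy
    by_contra hne
    exact vertinj x y hx hy hne hxy
  have hmemL : ∀ x, x ∈ L ↔ ∃ r, r < ℓ ∧ g r = x := by
    intro x
    simp [hL, List.mem_map]
  set c : Equiv.Perm V := L.formPerm with hcdef
  have hc : ∀ r, r < ℓ → c (g r) = g (r+1) := by
    intro r hr
    have h1 : c (L[r]'(by omega)) = L[(r+1) % L.length]'(Nat.mod_lt _ (by omega)) :=
      List.formPerm_apply_getElem L hnodup r (by omega)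
    rw [hgetL r hr] at h1
    rw [h1]
    have h2 : (r+1) % L.length < ℓ := by rw [hlen]; exact Nat.mod_lt _ (by omega)
    rw [hgetL _ (by rwa [hlen] at h2 ⊢)]
    rw [hlen, ← gmod (r+1)]
  have hcfix : ∀ x, x ∉ L → c x = x := fun x h => List.formPerm_apply_of_notMem h
  set C : Finset V := L.toFinset with hC
  have hmemC : ∀ x, x ∈ C ↔ ∃ r, r < ℓ ∧ g r = x := by
    intro x
    rw [hC, List.mem_toFinset]
    exact hmemL x
  have hgC : ∀ n, g n ∈ C := by
    intro n
    rw [hmemC]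
    exact ⟨n % ℓ, Nat.mod_lt _ (by omega), (gmod n).symm⟩
  have hgs : ∀ n, g n ∈ s := by
    intro n
    induction n with
    | zero => exact hv0
    | succ m ih => exact hs (g m) ih (by simpa using hadj m)
  refine ⟨C, c, ⟨g 0, hgC 0⟩, ?_, ?_, ?_, ?_⟩
  · intro x hx
    rw [hmemC] at hx
    obtain ⟨r, _, rfl⟩ := hx
    exact hgs r
  · intro v hv
    exact hcfix v (fun h => hv (List.mem_toFinset.mpr h))
  · intro v hv
    rw [hmemC] at hv
    obtain ⟨r, hr, rfl⟩ := hv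
    have h1 : c (g r) = g (r+1) := hc r hr
    refine ⟨by rw [h1]; exact hgC _, by rw [h1]; exact hadj r, ?_⟩
    -- c (c (g r)) ≠ g r
    set r1 := (r+1) % ℓ with hr1
    have hr1ℓ : r1 < ℓ := Nat.mod_lt _ (by omega)
    have h2 : c (g (r+1)) = g (r1 + 1) := by
      rw [gmod (r+1), ← hr1, hc r1 hr1ℓ]
    set r2 := (r1+1) % ℓ with hr2
    have hr2ℓ : r2 < ℓ := Nat.mod_lt _ (by omega)
    have h3 : g (r1 + 1) = g r2 := gmod (r1+1)
    have hr2r : r2 ≠ r := by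
      rcases Nat.lt_or_ge (r+2) ℓ with hlt | hge
      · have e1 : r1 = r + 1 := Nat.mod_eq_of_lt (by omega)
        have e2 : r2 = r + 2 := by
          rw [hr2, e1, Nat.mod_eq_of_lt (by omega)]
        omega
      · rcases Nat.lt_or_ge (r+1) ℓ with hlt' | hge'
        · -- r + 2 = ℓ
          have e1 : r1 = r + 1 := Nat.mod_eq_of_lt hlt'
          have e2 : r2 = 0 := by
            rw [hr2, e1, show r + 1 + 1 = ℓ by omega, Nat.mod_self]
          omega
        · -- r + 1 = ℓ
          have e1 : r1 = 0 := by
            rw [hr1, show r + 1 = ℓ by omega, Nat.mod_self]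
          have e2 : r2 = 1 := by
            rw [hr2, e1, Nat.mod_eq_of_lt (by omega)]
          omega
    rw [h1, h2, h3]
    exact vertinj r2 r hr2ℓ hr hr2r
  · intro v hv
    rw [hmemC] at hv
    obtain ⟨r, hr, rfl⟩ := hv
    have hgr : g r = g ((r + ℓ - 1) + 1) := by
      rw [show r + ℓ - 1 + 1 = r + ℓ by omega, gmod (r + ℓ),
        Nat.add_mod_right, Nat.mod_eq_of_lt hr]
    rw [hgr, nbrpair (r + ℓ - 1)]
    intro x hx
    rw [Finset.mem_insert, Finset.mem_singleton] at hx
    rcases hx with rfl | rfl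
    · exact hgC _
    · exact hgC _

end cyc
section orient
variable {G : SimpleGraph V} [DecidableRel G.Adj]
  (hdeg : ∀ v, (G.neighborFinset v).card = 2)
include hdeg

lemma orient_aux (s : Finset V) :
    (∀ v ∈ s, G.neighborFinset v ⊆ s) →
    ∃ π : Equiv.Perm V, (∀ v, π v ≠ v → v ∈ s) ∧ ∀ v ∈ s, G.Adj v (π v) ∧ π (π v) ≠ v := by
  induction s using Finset.strongInduction with
  | _ s ih =>
    intro hs
    rcases s.eq_empty_or_nonempty with rfl | ⟨v0, hv0⟩
    · exact ⟨1, fun v h => absurd rfl h, fun v hv => absurd hv (Finset.notMem_empty v)⟩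
    · obtain ⟨C, c, hCne, hCs, hcfix, hcprop, hCclosed⟩ := exists_cycle hdeg hs hv0
      have hs' : ∀ v ∈ s \ C, G.neighborFinset v ⊆ s \ C := by
        intro v hv x hx
        rw [Finset.mem_sdiff] at hv ⊢
        refine ⟨hs v hv.1 hx, fun hxC => hv.2 ?_⟩
        rw [SimpleGraph.mem_neighborFinset] at hx
        exact hCclosed x hxC (by rw [SimpleGraph.mem_neighborFinset]; exact hx.symm)
      obtain ⟨π', hmv', hprop'⟩ := ih (s \ C) (Finset.sdiff_ssubset hCs hCne) hs'
      have hfixC : ∀ v ∈ C, π' v = v := by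
        intro v hv
        by_contra h
        exact (Finset.mem_sdiff.1 (hmv' v h)).2 hv
      refine ⟨π' * c, ?_, ?_⟩
      · intro v hv
        by_cases hC : v ∈ C
        · exact hCs hC
        · have : π' v ≠ v := by
            rwa [Equiv.Perm.mul_apply, hcfix v hC] at hv
          exact (Finset.mem_sdiff.1 (hmv' v this)).1
      · intro v hv
        have hπC : ∀ w ∈ C, (π' * c) w = c w := by
          intro w hw
          rw [Equiv.Perm.mul_apply, hfixC (c w) (hcprop w hw).1]
        by_cases hC : v ∈ C
        · obtain ⟨hcv, hadjv, hccv⟩ := hcprop v hC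
          refine ⟨by rw [hπC v hC]; exact hadjv, ?_⟩
          rw [hπC v hC, hπC (c v) hcv]
          exact hccv
        · have hvs' : v ∈ s \ C := Finset.mem_sdiff.2 ⟨hv, hC⟩
          have hπv : (π' * c) v = π' v := by
            rw [Equiv.Perm.mul_apply, hcfix v hC]
          obtain ⟨hadjv, h2v⟩ := hprop' v hvs'
          refine ⟨by rw [hπv]; exact hadjv, ?_⟩
          have hne : π' v ≠ v := hadjv.ne'
          have hπ'vs' : π' v ∈ s \ C := by
            by_contra h
            have : π' (π' v) = π' v := by
              by_contra h2
              exact h (hmv' (π' v) h2)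
            exact hne (π'.injective this)
          have hπ'vnC : π' v ∉ C := (Finset.mem_sdiff.1 hπ'vs').2
          rw [hπv, Equiv.Perm.mul_apply, hcfix (π' v) hπ'vnC]
          exact h2v

lemma orient : ∃ π : Equiv.Perm V, ∀ v, G.Adj v (π v) ∧ π (π v) ≠ v := by
  obtain ⟨π, _, h⟩ := orient_aux hdeg Finset.univ (fun v _ x _ => Finset.mem_univ x)
  exact ⟨π, fun v => h v (Finset.mem_univ v)⟩

end orient
open Equiv Equiv.Perm in
lemma decomp [Nonempty V] {π : Equiv.Perm V} (hfix : ∀ v, π v ≠ v) (h2 : ∀ v, π (π v) ≠ v) :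
    ∃ (Q : Finset (Finset V)) (base : Finset V → V),
      (∀ t ∈ Q, base t ∈ t) ∧
      (∀ t ∈ Q, ∀ r : ℕ, (π ^ r) (base t) ∈ t) ∧
      (∀ t ∈ Q, ∀ u ∈ t, ∃ r, r < t.card ∧ (π ^ r) (base t) = u) ∧
      (∀ t ∈ Q, ∀ r r', r < t.card → r' < t.card →
        (π ^ r) (base t) = (π ^ r') (base t) → r = r') ∧
      (∀ t ∈ Q, (π ^ t.card) (base t) = base t) ∧
      (∀ t ∈ Q, ∀ u ∈ t, π u ∈ t) ∧
      (∀ t ∈ Q, ∀ t' ∈ Q, t ≠ t' → Disjoint t t') ∧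
      Finset.univ = Q.biUnion id ∧
      (∀ t ∈ Q, 3 ≤ t.card) := by
  classical
  have hsup : ∀ v : V, v ∈ π.support := fun v => Equiv.Perm.mem_support.2 (hfix v)
  have hmem : ∀ v u : V, u ∈ (π.cycleOf v).support ↔ π.SameCycle v u := by
    intro v u
    rw [Equiv.Perm.mem_support_cycleOf_iff]
    exact ⟨fun h => h.1, fun h => ⟨h, hsup v⟩⟩
  set Q : Finset (Finset V) := Finset.univ.image (fun v => (π.cycleOf v).support) with hQ
  have hQmem : ∀ t, t ∈ Q ↔ ∃ v, (π.cycleOf v).support = t := by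
    intro t; simp [hQ]
  -- each class is the sameCycle class of each of its elements
  have hclass : ∀ t ∈ Q, ∀ u ∈ t, (π.cycleOf u).support = t := by
    intro t ht u hu
    obtain ⟨v, rfl⟩ := (hQmem t).1 ht
    have hvu : π.SameCycle v u := (hmem v u).1 hu
    ext x
    rw [hmem, hmem]
    exact ⟨fun h => hvu.trans h, fun h => hvu.symm.trans h⟩
  choose base0 hbase0 using fun (t : Finset V) (h : t.Nonempty) => h
  have hQne : ∀ t ∈ Q, t.Nonempty := by
    intro t ht
    obtain ⟨v, rfl⟩ := (hQmem t).1 ht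
    exact ⟨v, (hmem v v).2 (Equiv.Perm.SameCycle.refl π v)⟩
  set base : Finset V → V :=
    fun t => if h : t.Nonempty then base0 t h else Classical.arbitrary V with hbase
  have hbmem : ∀ t ∈ Q, base t ∈ t := by
    intro t ht
    rw [hbase]
    simp only [dif_pos (hQne t ht)]
    exact hbase0 t (hQne t ht)
  have hcyc : ∀ t ∈ Q, π.IsCycleOn t := by
    intro t ht
    have := Equiv.Perm.isCycleOn_support_cycleOf π (base t)
    rwa [hclass t ht (base t) (hbmem t ht)] at this
  have hπmem : ∀ t ∈ Q, ∀ u ∈ t, π u ∈ t := by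
    intro t ht u hu
    have h1 := hclass t ht u hu
    rw [← h1, hmem]
    exact Equiv.Perm.sameCycle_apply_right.2 (Equiv.Perm.SameCycle.refl π u)
  have hpowmem : ∀ t ∈ Q, ∀ r : ℕ, (π ^ r) (base t) ∈ t := by
    intro t ht r
    induction r with
    | zero => simpa using hbmem t ht
    | succ m ih => rw [pow_succ', Equiv.Perm.mul_apply]; exact hπmem t ht _ ih
  refine ⟨Q, base, hbmem, hpowmem, ?_, ?_, ?_, hπmem, ?_, ?_, ?_⟩
  · intro t ht u hu
    obtain ⟨r, hr, h⟩ := (hcyc t ht).exists_pow_eq (hbmem t ht) hu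
    exact ⟨r, hr, h⟩
  · intro t ht r r' hr hr' h
    have := ((hcyc t ht).pow_apply_eq_pow_apply (hbmem t ht)).1 h
    have h1 : r % t.card = r' % t.card := this
    rwa [Nat.mod_eq_of_lt hr, Nat.mod_eq_of_lt hr'] at h1
  · intro t ht
    have := ((hcyc t ht).pow_apply_eq_pow_apply (a := base t) (hbmem t ht)
      (m := t.card) (n := 0)).2 (by simp [Nat.ModEq])
    simpa using this
  · intro t ht t' ht' hne
    rw [Finset.disjoint_left]
    intro u hu hu'
    exact hne ((hclass t ht u hu).symm.trans (hclass t' ht' u hu'))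
  · ext v
    simp only [Finset.mem_biUnion, id, Finset.mem_univ, true_iff]
    exact ⟨(π.cycleOf v).support, (hQmem _).2 ⟨v, rfl⟩, (hmem v v).2 (Equiv.Perm.SameCycle.refl π v)⟩
  · intro t ht
    set ℓ := t.card with hℓ
    have hb := hbmem t ht
    have hpos : 0 < ℓ := Finset.card_pos.2 ⟨base t, hb⟩
    have h1 : ℓ ≠ 1 := by
      intro h
      have := ((hcyc t ht).pow_apply_eq_pow_apply (a := base t) hb (m := 1) (n := 0)).2
        (by rw [← hℓ, h]; exact Nat.modEq_one)
      simp only [pow_one, pow_zero, Equiv.Perm.one_apply] at this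
      exact hfix (base t) this
    have h2' : ℓ ≠ 2 := by
      intro h
      have := ((hcyc t ht).pow_apply_eq_pow_apply (a := base t) hb (m := 2) (n := 0)).2
        (by rw [← hℓ, h]; decide)
      simp only [pow_succ, pow_zero, pow_one, Equiv.Perm.one_apply, Equiv.Perm.mul_apply] at this
      exact h2 (base t) (by
        have h22 : (π ^ 2) (base t) = base t := by simpa [pow_succ] using this
        rwa [pow_succ, pow_one, Equiv.Perm.mul_apply] at h22)
    omega
section parts
variable {π : Equiv.Perm V}

/-- generic builder: given per-class position sets, build `S` with controlled
membership and cardinality. -/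
lemma Sspec (Q : Finset (Finset V)) (base : Finset V → V)
    (hbmem : ∀ t ∈ Q, base t ∈ t)
    (hpowmem : ∀ t ∈ Q, ∀ r : ℕ, (π ^ r) (base t) ∈ t)
    (hinj : ∀ t ∈ Q, ∀ r r', r < t.card → r' < t.card →
      (π ^ r) (base t) = (π ^ r') (base t) → r = r')
    (hdisj : ∀ t ∈ Q, ∀ t' ∈ Q, t ≠ t' → Disjoint t t')
    (p : Finset V → Finset ℕ)
    (hp : ∀ t ∈ Q, ∀ r ∈ p t, r < t.card) :
    ∃ S : Finset V, S.card = ∑ t ∈ Q, (p t).card ∧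
      ∀ t ∈ Q, ∀ r, r < t.card → ((π ^ r) (base t) ∈ S ↔ r ∈ p t) := by
  classical
  set S : Finset V := Q.biUnion (fun t => (p t).image (fun r => (π ^ r) (base t))) with hS
  have himg : ∀ t ∈ Q, (p t).image (fun r => (π ^ r) (base t)) ⊆ t := by
    intro t ht x hx
    obtain ⟨r, _, rfl⟩ := Finset.mem_image.1 hx
    exact hpowmem t ht r
  refine ⟨S, ?_, ?_⟩
  · rw [hS, Finset.card_biUnion]
    · refine Finset.sum_congr rfl (fun t ht => ?_)
      apply Finset.card_image_of_injOn
      intro r hr r' hr' h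
      exact hinj t ht r r' (hp t ht r hr) (hp t ht r' hr') h
    · intro t ht t' ht' hne
      exact Finset.disjoint_of_subset_left (himg t ht)
        (Finset.disjoint_of_subset_right (himg t' ht') (hdisj t ht t' ht' hne))
  · intro t ht r hr
    constructor
    · intro h
      rw [hS, Finset.mem_biUnion] at h
      obtain ⟨t', ht', hmem⟩ := h
      have htt : t' = t := by
        by_contra hne
        exact Finset.disjoint_left.1 (hdisj t' ht' t ht hne) (himg t' ht' hmem)
          (hpowmem t ht r)
      rw [htt] at hmem
      obtain ⟨r', hr', h⟩ := Finset.mem_image.1 hmem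
      have heq := hinj t ht r' r (hp t ht r' hr') hr h
      rwa [← heq]
    · intro h
      rw [hS, Finset.mem_biUnion]
      exact ⟨t, ht, Finset.mem_image.2 ⟨r, h, rfl⟩⟩

lemma part1 [Nonempty V] (hfix : ∀ v, π v ≠ v) (h2 : ∀ v, π (π v) ≠ v)
    (m : ℕ) (hm : m ≤ Fintype.card V) :
    ∃ S : Finset V, S.card = m ∧
      (Finset.univ.filter (fun v => ¬((v ∈ S) ↔ (π v ∈ S)))).card ≤ 2 := by
  classical
  obtain ⟨Q, base, hbmem, hpowmem, hsurj, hinj, hper, hπmem, hdisj, huniv, h3⟩ :=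
    decomp hfix h2
  have htot : ∑ t ∈ Q, t.card = Fintype.card V := by
    rw [← Finset.card_univ, huniv]
    exact (Finset.card_biUnion hdisj).symm
  -- maximal subfamily with total size ≤ m
  have hPne : (Q.powerset.filter (fun q => ∑ t ∈ q, t.card ≤ m)).Nonempty :=
    ⟨∅, by simp⟩
  obtain ⟨Q', hQ'mem, hQ'max⟩ :=
    Finset.exists_max_image _ (fun q => ∑ t ∈ q, t.card) hPne
  rw [Finset.mem_filter, Finset.mem_powerset] at hQ'mem
  obtain ⟨hQ'sub, hQ'le⟩ := hQ'mem
  set M := ∑ t ∈ Q', t.card with hM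
  -- the universal fact: `π v` written through class positions
  have hstep : ∀ t ∈ Q, ∀ r, r < t.card → π ((π ^ r) (base t)) = (π ^ ((r+1) % t.card)) (base t) := by
    intro t ht r hr
    have h1 : π ((π ^ r) (base t)) = (π ^ (r+1)) (base t) := by
      rw [pow_succ', Equiv.Perm.mul_apply]
    rcases Nat.lt_or_ge (r+1) t.card with hlt | hge
    · rw [h1, Nat.mod_eq_of_lt hlt]
    · have hr1 : r + 1 = t.card := by omega
      rw [h1, hr1, Nat.mod_self, pow_zero, Equiv.Perm.one_apply, hper t ht]
  by_cases hd : M = m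
  · -- exact split, no partial class
    obtain ⟨S, hcard, hmem⟩ := Sspec Q base hbmem hpowmem hinj hdisj
      (fun t => if t ∈ Q' then Finset.range t.card else ∅)
      (by intro t ht r hr
          split_ifs at hr with h
          · exact Finset.mem_range.1 hr
          · exact absurd hr (Finset.notMem_empty r))
    refine ⟨S, ?_, ?_⟩
    · rw [hcard, ← hd, hM]
      calc ∑ t ∈ Q, (if t ∈ Q' then Finset.range t.card else ∅).card
          = ∑ t ∈ Q \ Q', (if t ∈ Q' then Finset.range t.card else ∅).card
            + ∑ t ∈ Q', (if t ∈ Q' then Finset.range t.card else ∅).card :=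
            (Finset.sum_sdiff hQ'sub).symm
        _ = 0 + ∑ t ∈ Q', t.card := by
            congr 1
            · exact Finset.sum_eq_zero (fun t ht => by
                rw [if_neg (Finset.mem_sdiff.1 ht).2]; simp)
            · exact Finset.sum_congr rfl (fun t ht => by
                rw [if_pos ht, Finset.card_range])
        _ = ∑ t ∈ Q', t.card := by omega
    · have : Finset.univ.filter (fun v => ¬((v ∈ S) ↔ (π v ∈ S))) = ∅ := by
        rw [Finset.filter_eq_empty_iff]
        intro v _
        rw [not_not]
        have hv : v ∈ Q.biUnion id := by rw [← huniv]; exact Finset.mem_univ v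
        obtain ⟨t, ht, hvt⟩ := Finset.mem_biUnion.1 hv
        obtain ⟨r, hr, rfl⟩ := hsurj t ht v hvt
        rw [hmem t ht r hr, hstep t ht r hr,
          hmem t ht ((r+1) % t.card) (Nat.mod_lt _ (by have := h3 t ht; omega))]
        by_cases hQ : t ∈ Q'
        · simp [hQ, Finset.mem_range, hr, Nat.mod_lt, (by have := h3 t ht; omega : 0 < t.card)]
        · simp [hQ]
      rw [this]
      simp
  · -- partial class t₀
    have hMlt : M < m := by
      rcases Nat.lt_or_ge M m with h | h
      · exact h
      · omega
    have hQ'ne : Q' ≠ Q := by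
      intro h
      rw [h, htot] at hM
      omega
    obtain ⟨t₀, ht₀Q, ht₀Q'⟩ : ∃ t₀, t₀ ∈ Q ∧ t₀ ∉ Q' := by
      by_contra h
      push_neg at h
      exact hQ'ne (Finset.Subset.antisymm hQ'sub (fun t ht => h t ht))
    set d := m - M with hdd
    have hdpos : 0 < d := by omega
    have hdlt : d < t₀.card := by
      by_contra h
      push_neg at h
      have hins : insert t₀ Q' ∈ Q.powerset.filter (fun q => ∑ t ∈ q, t.card ≤ m) := by
        rw [Finset.mem_filter, Finset.mem_powerset]
        refine ⟨Finset.insert_subset ht₀Q hQ'sub, ?_⟩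
        rw [Finset.sum_insert ht₀Q']
        omega
      have := hQ'max _ hins
      rw [Finset.sum_insert ht₀Q'] at this
      have h3' := h3 t₀ ht₀Q
      omega
    obtain ⟨S, hcard, hmem⟩ := Sspec Q base hbmem hpowmem hinj hdisj
      (fun t => if t ∈ Q' then Finset.range t.card else if t = t₀ then Finset.range d else ∅)
      (by intro t ht r hr
          split_ifs at hr with h h'
          · exact Finset.mem_range.1 hr
          · rw [Finset.mem_range] at hr; subst h'; omega
          · exact absurd hr (Finset.notMem_empty r))
    have hca : ∀ t ∈ Q,
        ((if t ∈ Q' then Finset.range t.card else if t = t₀ then Finset.range d else ∅)).card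
          = (if t ∈ Q' then t.card else if t = t₀ then d else 0) := by
      intro t _
      split_ifs <;> simp
    refine ⟨S, ?_, ?_⟩
    · rw [hcard, Finset.sum_congr rfl hca, ← Finset.sum_sdiff hQ'sub]
      have e1 : ∑ t ∈ Q \ Q', (if t ∈ Q' then t.card else if t = t₀ then d else 0) = d := by
        rw [Finset.sum_eq_single_of_mem t₀ (Finset.mem_sdiff.2 ⟨ht₀Q, ht₀Q'⟩)]
        · rw [if_neg ht₀Q', if_pos rfl]
        · intro t ht hne
          rw [Finset.mem_sdiff] at ht
          rw [if_neg ht.2, if_neg hne]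
      have e2 : ∑ t ∈ Q', (if t ∈ Q' then t.card else if t = t₀ then d else 0) = M := by
        rw [hM]
        exact Finset.sum_congr rfl (fun t ht => if_pos ht)
      rw [e1, e2]
      omega
    · -- crossing vertices lie in a 2-element set
      have hsub : Finset.univ.filter (fun v => ¬((v ∈ S) ↔ (π v ∈ S))) ⊆
          {(π ^ (d-1)) (base t₀), (π ^ (t₀.card - 1)) (base t₀)} := by
        intro v hv
        rw [Finset.mem_filter] at hv
        obtain ⟨_, hcross⟩ := hv
        have hv : v ∈ Q.biUnion id := by rw [← huniv]; exact Finset.mem_univ v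
        obtain ⟨t, ht, hvt⟩ := Finset.mem_biUnion.1 hv
        obtain ⟨r, hr, rfl⟩ := hsurj t ht v hvt
        have hℓpos : 0 < t.card := by have := h3 t ht; omega
        rw [hmem t ht r hr, hstep t ht r hr,
          hmem t ht ((r+1) % t.card) (Nat.mod_lt _ hℓpos)] at hcross
        by_cases hQ : t ∈ Q'
        · exfalso
          apply hcross
          simp [hQ, Finset.mem_range, hr, Nat.mod_lt _ hℓpos]
        · by_cases ht0 : t = t₀
          · subst ht0
            rw [if_neg hQ, if_pos rfl, Finset.mem_range, Finset.mem_range] at hcross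
            rcases Nat.lt_or_ge (r+1) t.card with hlt | hge
            · rw [Nat.mod_eq_of_lt hlt] at hcross
              have : r = d - 1 := by omega
              subst this
              exact Finset.mem_insert_self _ _
            · have : r = t.card - 1 := by omega
              subst this
              exact Finset.mem_insert.2 (Or.inr (Finset.mem_singleton_self _))
          · exfalso
            apply hcross
            simp [hQ, ht0]
      calc (Finset.univ.filter (fun v => ¬((v ∈ S) ↔ (π v ∈ S)))).card
          ≤ ({(π ^ (d-1)) (base t₀), (π ^ (t₀.card - 1)) (base t₀)} : Finset V).card :=
            Finset.card_le_card hsub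
        _ ≤ 2 := Finset.card_insert_le _ _ |>.trans (by simp)

end parts
section part2
variable {π : Equiv.Perm V}

lemma part2 [Nonempty V] (hfix : ∀ v, π v ≠ v) (h2 : ∀ v, π (π v) ≠ v)
    (m : ℕ) (hm : Fintype.card V = 2 * m) :
    ∃ S : Finset V, S.card = m ∧
      2 * Fintype.card V ≤
        3 * (Finset.univ.filter (fun v => ¬((v ∈ S) ↔ (π v ∈ S)))).card := by
  classical
  obtain ⟨Q, base, hbmem, hpowmem, hsurj, hinj, hper, hπmem, hdisj, huniv, h3⟩ :=
    decomp hfix h2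
  have htot : ∑ t ∈ Q, t.card = Fintype.card V := by
    rw [← Finset.card_univ, huniv]
    exact (Finset.card_biUnion hdisj).symm
  have hstep : ∀ t ∈ Q, ∀ r, r < t.card →
      π ((π ^ r) (base t)) = (π ^ ((r+1) % t.card)) (base t) := by
    intro t ht r hr
    have h1 : π ((π ^ r) (base t)) = (π ^ (r+1)) (base t) := by
      rw [pow_succ', Equiv.Perm.mul_apply]
    rcases Nat.lt_or_ge (r+1) t.card with hlt | hge
    · rw [h1, Nat.mod_eq_of_lt hlt]
    · have hr1 : r + 1 = t.card := by omega
      rw [h1, hr1, Nat.mod_self, pow_zero, Equiv.Perm.one_apply, hper t ht]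
  -- odd classes
  set O : Finset (Finset V) := Q.filter (fun t => Odd t.card) with hO
  have hOcard : O.card % 2 = 0 := by
    have h1 : ∑ t ∈ Q, t.card % 2 = O.card := by
      rw [hO, Finset.card_filter]
      refine Finset.sum_congr rfl (fun t _ => ?_)
      rcases Nat.even_or_odd t.card with h | h
      · rw [if_neg (by simpa using h), Nat.even_iff.1 h]
      · rw [if_pos h, Nat.odd_iff.1 h]
    have h2' : (∑ t ∈ Q, t.card) % 2 = (∑ t ∈ Q, t.card % 2) % 2 :=
      Finset.sum_nat_mod _ _ _
    rw [htot, hm, h1] at h2'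
    omega
  obtain ⟨O₁, hO₁sub, hO₁card⟩ := Finset.exists_subset_card_eq (s := O) (n := O.card / 2)
    (Nat.div_le_self _ _)
  have hO₁Q : O₁ ⊆ Q := hO₁sub.trans (Finset.filter_subset _ _)
  set b : Finset V → ℕ := fun t => if t ∈ O₁ then (t.card+1)/2 else t.card/2 with hb
  have hO₁odd : ∀ t ∈ O₁, t.card % 2 = 1 := by
    intro t ht
    have := (Finset.mem_filter.1 (hO₁sub ht)).2
    exact Nat.odd_iff.1 this
  have hbfacts : ∀ t ∈ Q, 1 ≤ b t ∧ 2 * b t ≤ t.card + 1 ∧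
      (2 * b t = t.card + 1 ∨ 2 * b t = t.card ∨ (2 * b t + 1 = t.card ∧ t.card % 2 = 1)) := by
    intro t ht
    have h3t := h3 t ht
    simp only [hb]
    by_cases h : t ∈ O₁
    · have := hO₁odd t h
      rw [if_pos h]
      omega
    · rw [if_neg h]
      rcases Nat.even_or_odd t.card with he | he
      · have := Nat.even_iff.1 he
        omega
      · have := Nat.odd_iff.1 he
        omega
  set p : Finset V → Finset ℕ := fun t => (Finset.range (b t)).image (fun r => 2 * r) with hp
  have hplt : ∀ t ∈ Q, ∀ r ∈ p t, r < t.card := by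
    intro t ht r hr
    simp only [hp] at hr
    obtain ⟨j, hj, rfl⟩ := Finset.mem_image.1 hr
    rw [Finset.mem_range] at hj
    have := hbfacts t ht
    omega
  have hpcard : ∀ t, (p t).card = b t := by
    intro t
    simp only [hp]
    rw [Finset.card_image_of_injective _ (fun a a' h => by omega), Finset.card_range]
  have hpmem : ∀ t, ∀ q : ℕ, (q ∈ p t ↔ q % 2 = 0 ∧ q < 2 * b t) := by
    intro t q
    simp only [hp]
    simp only [Finset.mem_image, Finset.mem_range]
    constructor
    · rintro ⟨j, hj, rfl⟩
      omega
    · rintro ⟨he, hlt⟩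
      exact ⟨q / 2, by omega, by omega⟩
  obtain ⟨S, hcard, hmem⟩ := Sspec Q base hbmem hpowmem hinj hdisj p hplt
  -- S has the right size
  have hScard : S.card = m := by
    have hOO : (Q \ O₁).filter (fun t => Odd t.card) = O \ O₁ := by
      ext t
      simp only [Finset.mem_filter, Finset.mem_sdiff, hO]
      tauto
    have hcO : O₁.card = (O \ O₁).card := by
      rw [Finset.card_sdiff_of_subset hO₁sub, hO₁card]
      omega
    have e1 : ∑ t ∈ O₁, 2 * b t = ∑ t ∈ O₁, (t.card + 1) := by
      refine Finset.sum_congr rfl (fun t ht => ?_)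
      have := hO₁odd t ht
      simp only [hb]
      rw [if_pos ht]
      omega
    have e2 : ∑ t ∈ Q \ O₁, 2 * b t + (O \ O₁).card = ∑ t ∈ Q \ O₁, t.card := by
      rw [← hOO, Finset.card_filter, ← Finset.sum_add_distrib]
      refine Finset.sum_congr rfl (fun t ht => ?_)
      have htQ : t ∈ Q := (Finset.mem_sdiff.1 ht).1
      have htO₁ : t ∉ O₁ := (Finset.mem_sdiff.1 ht).2
      simp only [hb]
      rw [if_neg htO₁]
      rcases Nat.even_or_odd t.card with he | he
      · rw [if_neg (by simpa using he)]
        have := Nat.even_iff.1 he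
        omega
      · rw [if_pos he]
        have := Nat.odd_iff.1 he
        omega
    have e3 : ∑ t ∈ Q \ O₁, 2 * b t + ∑ t ∈ O₁, 2 * b t = ∑ t ∈ Q, 2 * b t :=
      Finset.sum_sdiff hO₁Q
    have e4 : ∑ t ∈ Q \ O₁, t.card + ∑ t ∈ O₁, t.card = ∑ t ∈ Q, t.card :=
      Finset.sum_sdiff hO₁Q
    have e5 : ∑ t ∈ Q, 2 * b t = 2 * ∑ t ∈ Q, b t := by
      rw [Finset.mul_sum]
    have e6 : ∑ t ∈ O₁, (t.card + 1) = ∑ t ∈ O₁, t.card + O₁.card := by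
      rw [Finset.sum_add_distrib, Finset.sum_const, smul_eq_mul, mul_one]
    have hsummed : S.card = ∑ t ∈ Q, b t := by
      rw [hcard]
      exact Finset.sum_congr rfl (fun t _ => hpcard t)
    rw [hsummed]
    omega
  refine ⟨S, hScard, ?_⟩
  -- crossing count per class
  have hclass : ∀ t ∈ Q, t.card - 1 ≤
      (t.filter (fun v => ¬((v ∈ S) ↔ (π v ∈ S)))).card := by
    intro t ht
    have hℓ3 := h3 t ht
    obtain ⟨hb1, hble, hbcases⟩ := hbfacts t ht
    set R : Finset ℕ := (Finset.range t.card).filter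
      (fun r => ¬((r ∈ p t) ↔ (((r+1) % t.card) ∈ p t))) with hR
    have hRcard : t.card - 1 ≤ R.card := by
      have hcompl : (Finset.range t.card).filter
          (fun r => ¬¬((r ∈ p t) ↔ (((r+1) % t.card) ∈ p t))) ⊆
          {if t.card ≤ 2 * b t then t.card - 1 else t.card - 2} := by
        intro r hr
        rw [Finset.mem_filter, Finset.mem_range, not_not] at hr
        obtain ⟨hrℓ, heq⟩ := hr
        rw [Finset.mem_singleton]
        rcases Nat.lt_or_ge r (t.card - 1) with hlt | hge
        · -- r+1 < t.card
          rw [Nat.mod_eq_of_lt (by omega)] at heq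
          rw [hpmem, hpmem] at heq
          rcases hbcases with hc | hc | hc
          · exfalso; omega
          · exfalso; omega
          · rw [if_neg (by omega)]
            omega
        · -- r = t.card - 1, wrap around
          have hreq : r = t.card - 1 := by omega
          have hmod : (r+1) % t.card = 0 := by
            rw [show r + 1 = t.card by omega, Nat.mod_self]
          rw [hmod, hpmem, hpmem] at heq
          have h0 : (0 : ℕ) % 2 = 0 ∧ 0 < 2 * b t := by omega
          have hrmem := heq.2 h0
          -- so Even r and r < 2b, i.e. ℓ-1 < 2b i.e. ℓ ≤ 2b
          rw [if_pos (by omega)]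
          omega
      have hsplit : R.card + ((Finset.range t.card).filter
          (fun r => ¬¬((r ∈ p t) ↔ (((r+1) % t.card) ∈ p t)))).card = t.card := by
        rw [hR]
        have := Finset.card_filter_add_card_filter_not
          (s := Finset.range t.card)
          (p := fun r => ¬((r ∈ p t) ↔ (((r+1) % t.card) ∈ p t)))
        rwa [Finset.card_range] at this
      have hle1 : ((Finset.range t.card).filter
          (fun r => ¬¬((r ∈ p t) ↔ (((r+1) % t.card) ∈ p t)))).card ≤ 1 :=
        (Finset.card_le_card hcompl).trans (by simp)
      omega
    -- map R into the crossing vertices of t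
    have hmap : R.card ≤ (t.filter (fun v => ¬((v ∈ S) ↔ (π v ∈ S)))).card := by
      apply Finset.card_le_card_of_injOn (fun r => (π ^ r) (base t))
      · intro r hr
        rw [hR, Finset.mem_coe, Finset.mem_filter, Finset.mem_range] at hr
        obtain ⟨hrℓ, hcross⟩ := hr
        rw [Finset.mem_coe, Finset.mem_filter]
        refine ⟨hpowmem t ht r, ?_⟩
        rw [hmem t ht r hrℓ, hstep t ht r hrℓ,
          hmem t ht ((r+1) % t.card) (Nat.mod_lt _ (by omega))]
        exact hcross
      · intro r hr r' hr' h
        rw [hR, Finset.coe_filter, Set.mem_setOf_eq] at hr hr'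
        rw [Finset.mem_range] at hr hr'
        exact hinj t ht r r' hr.1 hr'.1 h
    omega
  -- sum up
  have hBsum : (Finset.univ.filter (fun v => ¬((v ∈ S) ↔ (π v ∈ S)))).card =
      ∑ t ∈ Q, (t.filter (fun v => ¬((v ∈ S) ↔ (π v ∈ S)))).card := by
    rw [huniv, Finset.filter_biUnion]
    exact Finset.card_biUnion (fun t ht t' ht' hne =>
      Finset.disjoint_filter_filter (hdisj t ht t' ht' hne))
  rw [hBsum]
  calc 2 * Fintype.card V = ∑ t ∈ Q, 2 * t.card := by
        rw [← Finset.mul_sum, htot]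
    _ ≤ ∑ t ∈ Q, 3 * (t.filter (fun v => ¬((v ∈ S) ↔ (π v ∈ S)))).card := by
        refine Finset.sum_le_sum (fun t ht => ?_)
        have h1 := hclass t ht
        have h2 := h3 t ht
        omega
    _ = 3 * ∑ t ∈ Q, (t.filter (fun v => ¬((v ∈ S) ↔ (π v ∈ S)))).card := by
        rw [Finset.mul_sum]

end part2
/-- build a permutation sending `S` exactly onto `X` -/
lemma exists_perm_mem_iff (S X : Finset V) (h : S.card = X.card) :
    ∃ σ : Equiv.Perm V, ∀ a, σ a ∈ X ↔ a ∈ S := by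
  classical
  have hc : Sᶜ.card = Xᶜ.card := by
    rw [Finset.card_compl, Finset.card_compl, h]
  set e₁ : {a // a ∈ S} ≃ {a // a ∈ X} := Finset.equivOfCardEq h with he₁
  set e₂' : {a // a ∈ Sᶜ} ≃ {a // a ∈ Xᶜ} := Finset.equivOfCardEq hc with he₂'
  set e₂ : {a // ¬ a ∈ S} ≃ {a // ¬ a ∈ X} :=
    ((Equiv.subtypeEquivRight (fun a => (Finset.mem_compl (s := S)).symm)).trans e₂').trans
      (Equiv.subtypeEquivRight (fun a => Finset.mem_compl (s := X))) with he₂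
  refine ⟨(Equiv.sumCompl (· ∈ S)).symm.trans
    ((Equiv.sumCongr e₁ e₂).trans (Equiv.sumCompl (· ∈ X))), fun a => ?_⟩
  by_cases ha : a ∈ S
  · simp only [Equiv.trans_apply, Equiv.sumCompl_symm_apply_of_pos ha,
      Equiv.sumCongr_apply, Sum.map_inl, Equiv.sumCompl_apply_inl]
    exact iff_of_true (e₁ ⟨a, ha⟩).2 ha
  · simp only [Equiv.trans_apply, Equiv.sumCompl_symm_apply_of_neg ha,
      Equiv.sumCongr_apply, Sum.map_inr, Equiv.sumCompl_apply_inr]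
    exact iff_of_false (e₂ ⟨a, ha⟩).2 ha

section count
variable {F : SimpleGraph V} [DecidableRel F.Adj] {π : Equiv.Perm V}

lemma edge_count (hdeg : ∀ v, (F.neighborFinset v).card = 2)
    (hadj : ∀ v, F.Adj v (π v)) (h2 : ∀ v, π (π v) ≠ v)
    (pr : Sym2 V → Prop) [DecidablePred pr] :
    {e ∈ F.edgeSet | pr e}.ncard =
      (Finset.univ.filter (fun v => pr s(v, π v))).card := by
  classical
  have hnbr : ∀ v, F.neighborFinset v = {π v, π.symm v} := by
    intro v
    have hne : π v ≠ π.symm v := by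
      intro h
      apply h2 v
      rw [h, Equiv.apply_symm_apply]
    have hsub : ({π v, π.symm v} : Finset V) ⊆ F.neighborFinset v := by
      intro x hx
      rw [Finset.mem_insert, Finset.mem_singleton] at hx
      rcases hx with rfl | rfl
      · simpa using hadj v
      · have := hadj (π.symm v)
        rw [Equiv.apply_symm_apply] at this
        simpa using this.symm
    refine (Finset.eq_of_subset_of_card_le hsub ?_).symm
    rw [hdeg, Finset.card_insert_of_notMem (by simpa using hne), Finset.card_singleton]
  have hedge : ∀ u w, F.Adj u w ↔ (w = π u ∨ u = π w) := by
    intro u w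
    constructor
    · intro h
      have : w ∈ F.neighborFinset u := by simpa using h
      rw [hnbr, Finset.mem_insert, Finset.mem_singleton] at this
      rcases this with rfl | rfl
      · exact Or.inl rfl
      · right
        rw [Equiv.apply_symm_apply]
    · rintro (rfl | rfl)
      · exact hadj u
      · exact (hadj w).symm
  set E : V → Sym2 V := fun v => s(v, π v) with hE
  have hEinj : Function.Injective E := by
    intro u v h
    rw [hE] at h
    simp only [Sym2.eq_iff] at h
    rcases h with ⟨h1, _⟩ | ⟨h1, h2'⟩
    · exact h1
    · exact absurd (by rw [h2', ← h1] : π (π u) = u) (h2 u)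
  have hset : {e ∈ F.edgeSet | pr e} = E '' {v | pr (E v)} := by
    ext e
    constructor
    · rintro ⟨he, hpr⟩
      induction e with
      | _ u w =>
        rw [SimpleGraph.mem_edgeSet, hedge] at he
        rcases he with rfl | rfl
        · exact ⟨u, hpr, rfl⟩
        · refine ⟨w, ?_, ?_⟩
          · show pr (E w)
            have : E w = s(π w, w) := by rw [hE]; exact Sym2.eq_swap
            rwa [this]
          · rw [hE]
            exact Sym2.eq_swap
    · rintro ⟨v, hv, rfl⟩
      exact ⟨by rw [hE, SimpleGraph.mem_edgeSet]; exact hadj v, hv⟩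
  rw [hset, Set.ncard_image_of_injective _ hEinj]
  have : {v | pr (E v)} = ↑(Finset.univ.filter (fun v => pr s(v, π v))) := by
    ext v
    simp [hE]
  rw [this, Set.ncard_coe_finset]

end count
/-- Let `k ≥ 1` and let `F` be a `2`-factor on `4k` vertices. Let `C` be the
red/blue-coloring of the complete graph on `4k` vertices whose red edges induce two disjoint
complete graphs of size `2k` each. Then `C` contains a copy of `F` with at least `4k − 2` red
edges, and a copy of `F` with at least `8k/3` blue edges. -/
theorem stmt19 (k : ℕ) (hk : 1 ≤ k) (F : SimpleGraph (Fin (4 * k)))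
    (hF : ∀ v, (F.neighborSet v).ncard = 2)
    (X : Finset (Fin (4 * k))) (hX : X.card = 2 * k) :
    (∃ σ : Fin (4 * k) ≃ Fin (4 * k),
      4 * k - 2 ≤ {e ∈ F.edgeSet | cliquesColoring X (Sym2.map ⇑σ e) = true}.ncard) ∧
    (∃ σ : Fin (4 * k) ≃ Fin (4 * k),
      (8 : ℝ) * k / 3 ≤
        ({e ∈ F.edgeSet | cliquesColoring X (Sym2.map ⇑σ e) = false}.ncard : ℝ)) := by
  classical
  haveI : Nonempty (Fin (4 * k)) := ⟨⟨0, by omega⟩⟩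
  have hdeg : ∀ v, (F.neighborFinset v).card = 2 := by
    intro v
    rw [SimpleGraph.neighborFinset_def, ← Set.ncard_eq_toFinset_card']
    exact hF v
  obtain ⟨π, hπ⟩ := orient hdeg
  have hadjπ : ∀ v, F.Adj v (π v) := fun v => (hπ v).1
  have h2π : ∀ v, π (π v) ≠ v := fun v => (hπ v).2
  have hfix : ∀ v, π v ≠ v := fun v => (hadjπ v).ne'
  have hcard : Fintype.card (Fin (4 * k)) = 4 * k := Fintype.card_fin _
  have hCC : ∀ (σ : Equiv.Perm (Fin (4 * k))) (u w : Fin (4 * k)),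
      cliquesColoring X (Sym2.map (⇑σ) s(u, w))
        = decide ((σ u ∈ X ∧ σ w ∈ X) ∨ (σ u ∉ X ∧ σ w ∉ X)) := by
    intro σ u w
    rw [Sym2.map_pair_eq]
    rfl
  constructor
  · obtain ⟨S, hS, hB⟩ := part1 hfix h2π (2 * k) (by rw [hcard]; omega)
    obtain ⟨σ, hσ⟩ := exists_perm_mem_iff S X (by rw [hS, hX])
    refine ⟨σ, ?_⟩
    rw [edge_count hdeg hadjπ h2π (fun e => cliquesColoring X (Sym2.map (⇑σ) e) = true)]
    have hfe : Finset.univ.filter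
          (fun v => cliquesColoring X (Sym2.map (⇑σ) s(v, π v)) = true)
        = Finset.univ.filter (fun v => ((v ∈ S) ↔ (π v ∈ S))) := by
      apply Finset.filter_congr
      intro v _
      rw [hCC σ v (π v)]
      simp only [decide_eq_true_eq]
      rw [hσ v, hσ (π v)]
      tauto
    rw [hfe]
    have hsplit := Finset.card_filter_add_card_filter_not
      (s := Finset.univ) (p := fun v => ((v ∈ S) ↔ (π v ∈ S)))
    rw [Finset.card_univ, hcard] at hsplit
    omega
  · obtain ⟨S, hS, hB⟩ := part2 hfix h2π (2 * k) (by rw [hcard]; omega)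
    obtain ⟨σ, hσ⟩ := exists_perm_mem_iff S X (by rw [hS, hX])
    refine ⟨σ, ?_⟩
    rw [edge_count hdeg hadjπ h2π (fun e => cliquesColoring X (Sym2.map (⇑σ) e) = false)]
    have hfe : Finset.univ.filter
          (fun v => cliquesColoring X (Sym2.map (⇑σ) s(v, π v)) = false)
        = Finset.univ.filter (fun v => ¬((v ∈ S) ↔ (π v ∈ S))) := by
      apply Finset.filter_congr
      intro v _
      rw [hCC σ v (π v)]
      simp only [decide_eq_false_iff_not]
      rw [hσ v, hσ (π v)]
      tauto
    rw [hfe]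
    rw [hcard] at hB
    rw [div_le_iff₀ (by norm_num : (0:ℝ) < 3)]
    have h8 : (8 * k : ℕ) ≤
        3 * (Finset.univ.filter (fun v => ¬((v ∈ S) ↔ (π v ∈ S)))).card := by omega
    calc (8:ℝ) * k = ((8 * k : ℕ) : ℝ) := by push_cast; ring
      _ ≤ ((3 * (Finset.univ.filter (fun v => ¬((v ∈ S) ↔ (π v ∈ S)))).card : ℕ) : ℝ) := by
          exact_mod_cast h8
      _ = ((Finset.univ.filter (fun v => ¬((v ∈ S) ↔ (π v ∈ S)))).card : ℝ) * 3 := by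
          push_cast; ring
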